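/- Let X be a locally convex topological vector space, let Z ⊂ X be a finite-faced cone, i.e. Z = {x ∈ X : p_i(x)=0 for i=1,…,μ and q_j(x) ≤ 0 for j=1,…,ν} for finitely many continuous linear functionals p_1,…,p_μ, q_1,…,q_ν on X, and let Y be a linear subspace of X that is dense in X. Then the cone Z ∩ Y is dense in Z. -/

import Mathlib

/-!
Let `T : X → ℝ^{μ+ν}` collect the functionals `p_i, q_j`, so that the cone contains the whole
fibre `T⁻¹(T z)` of each of its points `z`. The image `T(Y)` is a finite-dimensional, hence
closed, subspace which is dense in `T(X)`, so `T(Y) = T(X)`, and `T` restricted to `Y` has a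
linear right inverse `s`, continuous because its domain is finite-dimensional. The continuous map
`Φ x = x - s (T x - T z)` fixes `z` and sends the dense set `Y` into `T⁻¹(T z) ∩ Y`, whose
closure therefore contains `z`.
-/

namespace ContinuousLinearMap

variable {𝕜 X F : Type*} [NontriviallyNormedField 𝕜] [CompleteSpace 𝕜]
  [AddCommGroup X] [Module 𝕜 X] [TopologicalSpace X]
  [AddCommGroup F] [Module 𝕜 F] [TopologicalSpace F]
  [IsTopologicalAddGroup F] [ContinuousSMul 𝕜 F] [T2Space F] [FiniteDimensional 𝕜 F]
  (T : X →L[𝕜] F) {Y : Submodule 𝕜 X}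

theorem map_eq_range_of_dense (hY : Dense (Y : Set X)) :
    Y.map (T : X →ₗ[𝕜] F) = LinearMap.range (T : X →ₗ[𝕜] F) := by
  refine le_antisymm LinearMap.map_le_range ?_
  rintro _ ⟨x, rfl⟩
  have hx : T x ∈ closure (Y.map (T : X →ₗ[𝕜] F) : Set F) :=
    map_mem_closure T.continuous (hY x) fun y hy => Submodule.mem_map_of_mem hy
  rwa [(Submodule.closed_of_finiteDimensional _).closure_eq] at hx

variable [IsTopologicalAddGroup X] [ContinuousSMul 𝕜 X]

theorem exists_rightInverse_into_dense (hY : Dense (Y : Set X)) :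
    ∃ s : LinearMap.range (T : X →ₗ[𝕜] F) →L[𝕜] X, (∀ v, s v ∈ Y) ∧ ∀ v, T (s v) = v := by
  let TY : Y →ₗ[𝕜] LinearMap.range (T : X →ₗ[𝕜] F) :=
    ((T : X →ₗ[𝕜] F) ∘ₗ Y.subtype).codRestrict _ fun y => ⟨y, rfl⟩
  have hTY : Function.Surjective TY := by
    rintro ⟨_, hv⟩
    rw [← T.map_eq_range_of_dense hY] at hv
    obtain ⟨y, hy, rfl⟩ := hv
    exact ⟨⟨y, hy⟩, rfl⟩
  obtain ⟨s, hs⟩ := TY.exists_rightInverse_of_surjective (LinearMap.range_eq_top.2 hTY)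
  refine ⟨LinearMap.toContinuousLinearMap (Y.subtype ∘ₗ s), fun v => (s v).2, fun v => ?_⟩
  exact congrArg Subtype.val (LinearMap.congr_fun hs v)

theorem mem_closure_fiber_inter_of_dense (hY : Dense (Y : Set X)) (z : X) :
    z ∈ closure (T ⁻¹' {T z} ∩ Y) := by
  obtain ⟨s, hsY, hTs⟩ := T.exists_rightInverse_into_dense hY
  let R := (T : X →ₗ[𝕜] F).rangeRestrict
  let Φ : X → X := fun x => x - s (R x - R z)
  have hΦ : Continuous Φ :=
    continuous_id.sub (s.continuous.comp ((T.continuous.sub continuous_const).subtype_mk _))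
  have hΦz : Φ z = z := by
    simp only [Φ, sub_self, map_zero, sub_zero]
  have hΦY : Set.MapsTo Φ Y (T ⁻¹' {T z} ∩ Y) := fun y hy =>
    ⟨by simp [Φ, hTs, R], sub_mem hy (hsY _)⟩
  simpa only [hΦz] using map_mem_closure hΦ (hY z) hΦY

end ContinuousLinearMap

theorem finiteFacedCone_inter_dense_subspace_dense_general
    {X : Type*} [AddCommGroup X] [Module ℝ X] [TopologicalSpace X]
    [IsTopologicalAddGroup X] [ContinuousSMul ℝ X]
    {μ ν : ℕ} (p : Fin μ → X →L[ℝ] ℝ) (q : Fin ν → X →L[ℝ] ℝ)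
    (Y : Submodule ℝ X) (hY : Dense (Y : Set X)) :
    {x : X | (∀ i, p i x = 0) ∧ ∀ j, q j x ≤ 0} ⊆
      closure ({x : X | (∀ i, p i x = 0) ∧ ∀ j, q j x ≤ 0} ∩ (Y : Set X)) := by
  intro z hz
  let T : X →L[ℝ] (Fin μ ⊕ Fin ν → ℝ) := ContinuousLinearMap.pi (Sum.elim p q)
  have hfiber : T ⁻¹' {T z} ⊆ {x : X | (∀ i, p i x = 0) ∧ ∀ j, q j x ≤ 0} := fun x hx => by
    have hTx : ∀ k, T x k = T z k := congrFun hx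
    exact ⟨fun i => (hTx (.inl i)).trans (hz.1 i), fun j => (hTx (.inr j)).trans_le (hz.2 j)⟩
  exact closure_mono (Set.inter_subset_inter_left _ hfiber)
    (T.mem_closure_fiber_inter_of_dense hY z)

/-- Dmitruk's lemma on density of cones. Let `X` be a locally convex
topological vector space, `Z ⊆ X` a finite-faced cone, i.e.
`Z = {x : p_i x = 0 (i = 1,…,μ), q_j x ≤ 0 (j = 1,…,ν)}` for finitely many continuous
linear functionals `p_i, q_j`, and let `Y` be a dense linear subspace of `X`.
Then the cone `Z ∩ Y` is dense in `Z`. -/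
theorem finiteFacedCone_inter_dense_subspace_dense
    {X : Type*} [AddCommGroup X] [Module ℝ X] [TopologicalSpace X]
    [IsTopologicalAddGroup X] [ContinuousSMul ℝ X] [LocallyConvexSpace ℝ X]
    {μ ν : ℕ} (p : Fin μ → X →L[ℝ] ℝ) (q : Fin ν → X →L[ℝ] ℝ)
    (Y : Submodule ℝ X) (hY : Dense (Y : Set X)) :
    {x : X | (∀ i, p i x = 0) ∧ ∀ j, q j x ≤ 0} ⊆
      closure ({x : X | (∀ i, p i x = 0) ∧ ∀ j, q j x ≤ 0} ∩ (Y : Set X)) :=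
  finiteFacedCone_inter_dense_subspace_dense_general p q Y hY
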